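/- Let K be a complete discretely valued field with normalized valuation v, residue field of cardinality 2, and v(2) = 4, and let τ be a uniformizer. If v(τ⁴ + 2) = 7, then −1 is a sum of 4 fourth powers in K. -/

import Mathlib

/-!
Put `a = τ³ + τ²`. Expanding, `a⁴ + 4 ≡ (τ⁴ + 2)² ≡ 0 mod τ¹³` because `v (τ⁴ + 2) = 7`, so
`b = a⁴ + 3` is a unit with `-b⁻¹ ≡ 1 mod τ¹³`. Newton's iteration for square roots converges
from `1` to a square root of any `u` with `v (u - 1) > 2 v(2)`, losing `v 2` of precision; since
`13 > 3 v(2)` it can be applied twice, giving `t` with `t⁴ = -b⁻¹`. Then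
`(a t)⁴ + t⁴ + t⁴ + t⁴ = t⁴ b = -1`.
-/

def sqrtNewtonStep {K : Type*} [Field K] (u x : K) : K := (x ^ 2 + u) / (2 * x)

def sqrtNewtonSeq {K : Type*} [Field K] (u : K) : ℕ → K
  | 0 => 1
  | n + 1 => sqrtNewtonStep u (sqrtNewtonSeq u n)

namespace AddValuation

variable {K : Type*} [Field K] (v : AddValuation K (WithTop ℤ))

def IsSeqComplete : Prop :=
  ∀ f : ℕ → K,
    (∀ n : ℕ, ∃ N : ℕ, ∀ i ≥ N, ∀ j ≥ N, ((n : ℤ) : WithTop ℤ) ≤ v (f i - f j)) →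
    ∃ L : K, ∀ n : ℕ, ∃ N : ℕ, ∀ i ≥ N, ((n : ℤ) : WithTop ℤ) ≤ v (f i - L)

theorem eq_zero_of_forall_le_map {x : K} (h : ∀ n : ℕ, ((n : ℤ) : WithTop ℤ) ≤ v x) : x = 0 := by
  refine v.top_iff.mp ?_
  induction hx : v x using WithTop.recTopCoe with
  | top => rfl
  | coe k =>
    have := h (k.toNat + 1)
    rw [hx, WithTop.coe_le_coe] at this
    omega

theorem map_eq_zero_of_pos_map_sub_one {x : K} (h : 0 < v (x - 1)) : v x = 0 :=
  (v.map_eq_of_lt_sub (by rwa [v.map_one])).trans v.map_one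

theorem coe_sub_le_map_div {x y : K} {k e : ℤ} (hx : (k : WithTop ℤ) ≤ v x)
    (hy : v y = e) : ((k - e : ℤ) : WithTop ℤ) ≤ v (x / y) := by
  rwa [v.map_div, hy, WithTop.LinearOrderedAddCommGroup.coe_sub,
    LinearOrderedAddCommGroupWithTop.sub_le_sub_iff_left_of_ne_top WithTop.coe_ne_top]

theorem le_map_sub_of_le_map_sub_succ {f : ℕ → K} {c : ℤ}
    (hf : ∀ n : ℕ, ((c + n : ℤ) : WithTop ℤ) ≤ v (f (n + 1) - f n)) {i j : ℕ} (hij : i ≤ j) :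
    ((c + i : ℤ) : WithTop ℤ) ≤ v (f j - f i) := by
  induction j, hij using Nat.le_induction with
  | base => simp
  | succ j hij ih =>
    rw [← sub_add_sub_cancel]
    exact v.map_le_add ((WithTop.coe_le_coe.mpr (by omega)).trans (hf j)) ih

theorem map_two_nonneg : 0 ≤ v 2 := by
  simpa [v.map_one, one_add_one_eq_two] using v.map_add 1 1

variable {v}

theorem IsSeqComplete.exists_limit (hK : v.IsSeqComplete) {f : ℕ → K} {c : ℤ}
    (hf : ∀ n : ℕ, ((c + n : ℤ) : WithTop ℤ) ≤ v (f (n + 1) - f n)) :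
    ∃ L : K, ∀ i : ℕ, ((c + i : ℤ) : WithTop ℤ) ≤ v (L - f i) := by
  have hcauchy (i j : ℕ) : ((c + min i j : ℤ) : WithTop ℤ) ≤ v (f i - f j) := by
    rcases le_total i j with hij | hji
    · rw [v.map_sub_swap, min_eq_left hij]
      exact v.le_map_sub_of_le_map_sub_succ hf hij
    · rw [min_eq_right hji]
      exact v.le_map_sub_of_le_map_sub_succ hf hji
  obtain ⟨L, hL⟩ := hK f fun n ↦ ⟨(n - c).toNat, fun i hi j hj ↦
    (WithTop.coe_le_coe.mpr (by omega)).trans (hcauchy i j)⟩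
  refine ⟨L, fun i ↦ ?_⟩
  obtain ⟨N, hN⟩ := hL (c + i).toNat
  rw [← sub_add_sub_cancel _ (f (max N i))]
  refine v.map_le_add ?_ ((WithTop.coe_le_coe.mpr (by omega)).trans (hcauchy _ i))
  rw [v.map_sub_swap]
  exact (WithTop.coe_le_coe.mpr (by omega)).trans (hN _ (le_max_left N i))

variable {e k m : ℤ} {u x : K}

theorem nonneg_of_map_two_eq (h2 : v 2 = e) : 0 ≤ e :=
  WithTop.coe_nonneg.mp (h2 ▸ v.map_two_nonneg)

theorem map_two_mul_of_map_eq_zero (h2 : v 2 = e) (hx : v x = 0) : v (2 * x) = e := by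
  rw [v.map_mul, h2, hx, add_zero]

theorem le_map_sqrtNewtonStep_sub (h2 : v 2 = e) (hx : v x = 0)
    (hk : (k : WithTop ℤ) ≤ v (x ^ 2 - u)) :
    ((k - e : ℤ) : WithTop ℤ) ≤ v (sqrtNewtonStep u x - x) := by
  have h2x := map_two_mul_of_map_eq_zero h2 hx
  obtain ⟨h2ne, hxne⟩ : (2 : K) ≠ 0 ∧ x ≠ 0 :=
    mul_ne_zero_iff.mp (v.ne_top_iff.mp (by rw [h2x]; exact WithTop.coe_ne_top))
  rw [sqrtNewtonStep, show (x ^ 2 + u) / (2 * x) - x = -(x ^ 2 - u) / (2 * x) by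
    field_simp; ring]
  exact v.coe_sub_le_map_div (by rwa [v.map_neg]) h2x

theorem le_map_sqrtNewtonStep_sq_sub (h2 : v 2 = e) (hx : v x = 0)
    (hk : (k : WithTop ℤ) ≤ v (x ^ 2 - u)) :
    ((k + k - (e + e) : ℤ) : WithTop ℤ) ≤ v (sqrtNewtonStep u x ^ 2 - u) := by
  have h2x := map_two_mul_of_map_eq_zero h2 hx
  obtain ⟨h2ne, hxne⟩ : (2 : K) ≠ 0 ∧ x ≠ 0 :=
    mul_ne_zero_iff.mp (v.ne_top_iff.mp (by rw [h2x]; exact WithTop.coe_ne_top))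
  rw [sqrtNewtonStep, show ((x ^ 2 + u) / (2 * x)) ^ 2 - u =
    (x ^ 2 - u) * (x ^ 2 - u) / ((2 * x) * (2 * x)) by field_simp; ring]
  refine v.coe_sub_le_map_div ?_ (by rw [v.map_mul, h2x]; rfl)
  rw [v.map_mul, WithTop.coe_add]
  exact add_le_add hk hk

theorem sqrtNewtonSeq_bounds (h2 : v 2 = e) (hm : 2 * e < m)
    (hu : (m : WithTop ℤ) ≤ v (u - 1)) (n : ℕ) :
    ((m - e : ℤ) : WithTop ℤ) ≤ v (sqrtNewtonSeq u n - 1) ∧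
      ((m + n : ℤ) : WithTop ℤ) ≤ v (sqrtNewtonSeq u n ^ 2 - u) := by
  have he := nonneg_of_map_two_eq h2
  induction n with
  | zero => simpa [sqrtNewtonSeq, v.map_sub_swap 1 u] using hu
  | succ n ih =>
    set x := sqrtNewtonSeq u n
    have hx : v x = 0 :=
      v.map_eq_zero_of_pos_map_sub_one ((WithTop.coe_lt_coe.mpr (by omega)).trans_le ih.1)
    constructor
    · rw [sqrtNewtonSeq, ← sub_add_sub_cancel _ x]
      exact v.map_le_add ((WithTop.coe_le_coe.mpr (by omega)).trans
        (le_map_sqrtNewtonStep_sub h2 hx ih.2)) ih.1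
    · exact (WithTop.coe_le_coe.mpr (by omega)).trans
        (le_map_sqrtNewtonStep_sq_sub h2 hx ih.2)

theorem map_sqrtNewtonSeq (h2 : v 2 = e) (hm : 2 * e < m)
    (hu : (m : WithTop ℤ) ≤ v (u - 1)) (n : ℕ) : v (sqrtNewtonSeq u n) = 0 := by
  have he := nonneg_of_map_two_eq h2
  exact v.map_eq_zero_of_pos_map_sub_one ((WithTop.coe_lt_coe.mpr (by omega)).trans_le
    (sqrtNewtonSeq_bounds h2 hm hu n).1)

theorem le_map_sqrtNewtonSeq_succ_sub (h2 : v 2 = e) (hm : 2 * e < m)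
    (hu : (m : WithTop ℤ) ≤ v (u - 1)) (n : ℕ) :
    ((m - e + n : ℤ) : WithTop ℤ) ≤ v (sqrtNewtonSeq u (n + 1) - sqrtNewtonSeq u n) :=
  (WithTop.coe_le_coe.mpr (by omega)).trans <| le_map_sqrtNewtonStep_sub h2
    (map_sqrtNewtonSeq h2 hm hu n) (sqrtNewtonSeq_bounds h2 hm hu n).2

theorem IsSeqComplete.exists_sq_eq (hK : v.IsSeqComplete) (h2 : v 2 = e) (hm : 2 * e < m)
    (hu : (m : WithTop ℤ) ≤ v (u - 1)) :
    ∃ w : K, w ^ 2 = u ∧ ((m - e : ℤ) : WithTop ℤ) ≤ v (w - 1) := by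
  have he := nonneg_of_map_two_eq h2
  set x := sqrtNewtonSeq u
  obtain ⟨L, hL⟩ := hK.exists_limit (le_map_sqrtNewtonSeq_succ_sub h2 hm hu)
  have hL1 : ((m - e : ℤ) : WithTop ℤ) ≤ v (L - 1) := by simpa [x, sqrtNewtonSeq] using hL 0
  have hL0 : v L = 0 :=
    v.map_eq_zero_of_pos_map_sub_one ((WithTop.coe_lt_coe.mpr (by omega)).trans_le hL1)
  refine ⟨L, sub_eq_zero.mp (v.eq_zero_of_forall_le_map fun n ↦ ?_), hL1⟩
  have hsum : (0 : WithTop ℤ) ≤ v (L + x n) :=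
    v.map_le_add hL0.ge (map_sqrtNewtonSeq h2 hm hu n).ge
  rw [show L ^ 2 - u = (L - x n) * (L + x n) + (x n ^ 2 - u) by ring]
  refine v.map_le_add ?_ ((WithTop.coe_le_coe.mpr (by omega)).trans
    (sqrtNewtonSeq_bounds h2 hm hu n).2)
  rw [v.map_mul, ← add_zero ((n : ℤ) : WithTop ℤ)]
  exact add_le_add ((WithTop.coe_le_coe.mpr (by omega)).trans (hL n)) hsum

theorem IsSeqComplete.exists_pow_four_eq (hK : v.IsSeqComplete) (h2 : v 2 = e)
    (hm : 3 * e < m) (hu : (m : WithTop ℤ) ≤ v (u - 1)) : ∃ t : K, t ^ 4 = u := by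
  have he := nonneg_of_map_two_eq h2
  obtain ⟨w, rfl, hw⟩ := hK.exists_sq_eq h2 (by omega) hu
  obtain ⟨t, rfl, -⟩ := hK.exists_sq_eq h2 (by omega) hw
  exact ⟨t, by ring⟩

theorem IsSeqComplete.exists_sum_four_pow_four_eq_neg_one (hK : v.IsSeqComplete)
    (h2 : v 2 = e) (hm : 3 * e < m) {a : K} (ha : (m : WithTop ℤ) ≤ v (a ^ 4 + 4)) :
    ∃ x₁ x₂ x₃ x₄ : K, x₁ ^ 4 + x₂ ^ 4 + x₃ ^ 4 + x₄ ^ 4 = -1 := by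
  have he := nonneg_of_map_two_eq h2
  set b := a ^ 4 + 3
  have hb : v b = 0 := by
    have : v (-1) < v (b - -1) := by
      rw [v.map_neg, v.map_one, show b - -1 = a ^ 4 + 4 by ring]
      exact (WithTop.coe_lt_coe.mpr (by omega)).trans_le ha
    rw [v.map_eq_of_lt_sub this, v.map_neg, v.map_one]
  have hb0 : b ≠ 0 := v.ne_top_iff.mp (by simp [hb])
  obtain ⟨t, ht⟩ := hK.exists_pow_four_eq h2 hm (u := -b⁻¹) <| by
    rw [show -b⁻¹ - 1 = -(a ^ 4 + 4) / b by field_simp; ring]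
    have : (m : WithTop ℤ) ≤ v (-(a ^ 4 + 4)) := by rwa [v.map_neg]
    simpa using v.coe_sub_le_map_div this hb
  refine ⟨a * t, t, t, t, ?_⟩
  rw [show (a * t) ^ 4 + t ^ 4 + t ^ 4 + t ^ 4 = t ^ 4 * b by ring, ht, neg_mul,
    inv_mul_cancel₀ hb0]

variable (v)

theorem le_map_pow_four_add_four {τ : K} (h2 : v 2 = ((4 : ℤ) : WithTop ℤ))
    (hτ : v τ = ((1 : ℤ) : WithTop ℤ)) (h : v (τ ^ 4 + 2) = ((7 : ℤ) : WithTop ℤ)) :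
    ((13 : ℤ) : WithTop ℤ) ≤ v ((τ ^ 3 + τ ^ 2) ^ 4 + 4) := by
  have hτ4 : v (τ ^ 4) = ((4 : ℤ) : WithTop ℤ) := by rw [v.map_pow, hτ]; norm_cast
  have hτ1 : ((0 : ℤ) : WithTop ℤ) ≤ v (τ + 1) :=
    v.map_le_add (by rw [hτ]; norm_cast) v.map_one.ge
  have hsub : ((4 : ℤ) : WithTop ℤ) ≤ v (τ ^ 4 - 2) := v.map_le_sub hτ4.ge h2.ge
  rw [show (τ ^ 3 + τ ^ 2) ^ 4 + 4 = (τ ^ 4 + 2) ^ 2 + τ ^ 4 * (τ ^ 4 + 2) * (τ ^ 4 - 2) +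
    2 * 2 * τ ^ 9 * (τ + 1) ^ 2 - 2 * τ ^ 10 by ring]
  refine v.map_le_sub (v.map_le_add (v.map_le_add ?_ ?_) ?_) ?_
  · rw [v.map_pow, h]; norm_cast
  · grw [v.map_mul, v.map_mul, hτ4, h, ← hsub]; norm_cast
  · grw [v.map_mul, v.map_mul, v.map_mul, v.map_pow, v.map_pow, h2, hτ, ← hτ1]; norm_cast
  · rw [v.map_mul, v.map_pow, h2, hτ]; norm_cast

end AddValuation

theorem stmt_15_general {K : Type*} [Field K] (v : K → WithTop ℤ)
    (hv0 : ∀ x : K, v x = ⊤ ↔ x = 0)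
    (hvmul : ∀ x y : K, v (x * y) = v x + v y)
    (hvadd : ∀ x y : K, min (v x) (v y) ≤ v (x + y))
    (hcomplete : ∀ f : ℕ → K,
      (∀ n : ℕ, ∃ N : ℕ, ∀ i ≥ N, ∀ j ≥ N, ((n : ℤ) : WithTop ℤ) ≤ v (f i - f j)) →
      ∃ L : K, ∀ n : ℕ, ∃ N : ℕ, ∀ i ≥ N, ((n : ℤ) : WithTop ℤ) ≤ v (f i - L))
    (h2 : v 2 = ((4 : ℤ) : WithTop ℤ))
    (τ : K) (hτ : v τ = ((1 : ℤ) : WithTop ℤ))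
    (h : v (τ ^ 4 + 2) = ((7 : ℤ) : WithTop ℤ)) :
    ∃ x₁ x₂ x₃ x₄ : K, x₁ ^ 4 + x₂ ^ 4 + x₃ ^ 4 + x₄ ^ 4 = -1 := by
  have hv1 : v 1 = 0 := by
    have hv1_ne_top : v 1 ≠ ⊤ := fun h1 ↦ one_ne_zero ((hv0 1).mp h1)
    rw [← add_left_inj_of_ne_top hv1_ne_top, zero_add, ← hvmul, one_mul]
  let V : AddValuation K (WithTop ℤ) := .of v ((hv0 0).mpr rfl) hv1 hvadd hvmul
  exact AddValuation.IsSeqComplete.exists_sum_four_pow_four_eq_neg_one (v := V) hcomplete h2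
    (by norm_num) (V.le_map_pow_four_add_four h2 hτ h)

/-- Let `K` be a complete discretely valued field with normalized (surjective)
valuation `v`, residue field of cardinality 2, and `v 2 = 4`, and let `τ` be a
uniformizer. If `v (τ⁴ + 2) = 7`, then `-1` is a sum of 4 fourth powers in `K`.
Completeness is expressed by the convergence of Cauchy sequences with respect
to `v`. -/
theorem stmt_15 {K : Type*} [Field K] (v : K → WithTop ℤ)
    (hv0 : ∀ x : K, v x = ⊤ ↔ x = 0)
    (hvmul : ∀ x y : K, v (x * y) = v x + v y)
    (hvadd : ∀ x y : K, min (v x) (v y) ≤ v (x + y))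
    (hsurj : ∀ n : ℤ, ∃ x : K, v x = (n : WithTop ℤ))
    (hres : ∀ x : K, v x = 0 → 0 < v (x - 1))
    (hcomplete : ∀ f : ℕ → K,
      (∀ n : ℕ, ∃ N : ℕ, ∀ i ≥ N, ∀ j ≥ N, ((n : ℤ) : WithTop ℤ) ≤ v (f i - f j)) →
      ∃ L : K, ∀ n : ℕ, ∃ N : ℕ, ∀ i ≥ N, ((n : ℤ) : WithTop ℤ) ≤ v (f i - L))
    (h2 : v 2 = ((4 : ℤ) : WithTop ℤ))
    (τ : K) (hτ : v τ = ((1 : ℤ) : WithTop ℤ))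
    (h : v (τ ^ 4 + 2) = ((7 : ℤ) : WithTop ℤ)) :
    ∃ x₁ x₂ x₃ x₄ : K, x₁ ^ 4 + x₂ ^ 4 + x₃ ^ 4 + x₄ ^ 4 = -1 :=
  stmt_15_general v hv0 hvmul hvadd hcomplete h2 τ hτ h
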